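/- arXiv:1601.07723 — 5 statements merged into one kernel-verified Lean document; each statement's English description precedes it below -/
import Mathlib

section
/- Let m ≥ 2, n ≥ 2k and 3 ≤ k ≤ ⌊n/2⌋. Then every matrix A ∈ S^(k)_{m×n} is self non-overlapping (unbordered): there is no nonzero shift (p,q) with |p| ≤ m−1, |q| ≤ n−1 such that A(i,j) = A(i+p, j+q) for all index pairs (i,j) for which both (i,j) and (i+p,j+q) are valid positions. -/
/-- A binary string (list of booleans, `false` = 0, `true` = 1) avoids `0^k`
and `1^k`, i.e. it contains neither `k` consecutive 0's nor `k` consecutive 1's. -/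
def Avoids (k : ℕ) (s : List Bool) : Prop :=
  ¬ (List.replicate k false <:+: s) ∧ ¬ (List.replicate k true <:+: s)
/-- `(p, q)` is an overlap of `B` on `A`: a nonzero integer shift with
`|p| ≤ m−1`, `|q| ≤ n−1` such that `A (i,j) = B (i+p, j+q)` whenever both
`(i,j)` and `(i+p, j+q)` are valid positions. -/
def IsOverlap {m n : ℕ} (A B : Fin m → Fin n → Bool) (p q : ℤ) : Prop :=
  ¬ (p = 0 ∧ q = 0) ∧ p.natAbs ≤ m - 1 ∧ q.natAbs ≤ n - 1 ∧
    ∀ (i : Fin m) (j : Fin n) (i' : Fin m) (j' : Fin n),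
      (i' : ℤ) = (i : ℤ) + p → (j' : ℤ) = (j : ℤ) + q → A i j = B i' j'
/-- The `i`-th row (0-indexed) of an `m × n` binary matrix, read as a binary string. -/
def row {m n : ℕ} (A : Fin m → Fin n → Bool) (i : ℕ) : List Bool :=
  List.ofFn (fun j : Fin n => if h : i < m then A ⟨i, h⟩ j else false)
/-- The set `S^(k)_{m×n}`: binary `m × n` matrices whose first row is
`1^{k−1} 0 w 1 0^{k−1}` (with `0w1` of length `n−2k+2` avoiding `0^k` and `1^k`),
whose middle rows end with `0` and avoid `0^k` and `1^k`, and whose last row is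
`1^k v 0^k` (with `v` of length `n−2k` avoiding `0^k` and `1^k`). -/
def SkSet (m n k : ℕ) : Set (Fin m → Fin n → Bool) :=
  {A |
    (∃ v : List Bool, v.length = n - 2*k + 2 ∧ Avoids k v ∧
        v.head? = some false ∧ v.getLast? = some true ∧
        row A 0 = List.replicate (k-1) true ++ v ++ List.replicate (k-1) false) ∧
    (∀ i : ℕ, 1 ≤ i → i ≤ m - 2 → Avoids k (row A i) ∧ (row A i).getLast? = some false) ∧
    (∃ v : List Bool, v.length = n - 2*k ∧ Avoids k v ∧
        row A (m-1) = List.replicate k true ++ v ++ List.replicate k false)}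

/-!
Since `(-p, -q)` is an overlap whenever `(p, q)` is, we may take `q ≥ 0`. Then the overlap makes
the first `n - q` entries of row `i` equal to the last `n - q` entries of row `i + p`.
For `p ≠ 0`, compare the last row with the row `|p|` above it: if `n - q ≥ k`, the block `0^k`
ending the last row (for `p > 0`) or the block `1^k` starting it (for `p < 0`) lands in a row that
avoids it. If `n - q < k`, a segment of `1`s at the start of the first or last row would equal the
end of a row, which ends in `0`.
For `p = 0` the last row `1^k v 0^k` would have a border `u`. A border of length at most `k`
consists of `1`s but ends in `0`. A border of length between `k` and `n - k` puts `0^k` inside `v`.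
A longer border gives `1^Q u = u 0^Q` with `Q = n - |u| ≥ 1`, which is impossible by counting
`1`s.
-/

namespace List

variable {α : Type*}

theorem replicate_isInfix_append_cons {k : ℕ} {b c : α} {l₁ l₂ : List α} (hcb : c ≠ b)
    (h : replicate k b <:+: l₁ ++ c :: l₂) :
    replicate k b <:+: l₁ ∨ replicate k b <:+: l₂ := by
  obtain ⟨a, hlen, hrun⟩ := infix_iff_getElem?.1 h
  simp only [length_replicate, length_append, length_cons, getElem_replicate] at hlen hrun
  by_cases hfit : k + a ≤ l₁.length
  · refine .inl (infix_iff_getElem?.2 ⟨a, by simpa using hfit, fun i hi => ?_⟩)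
    simp only [length_replicate] at hi
    rw [getElem_replicate, ← hrun i hi, getElem?_append_left (by omega)]
  · have hsep : l₁.length < a := by
      by_contra hle
      have hc := hrun (l₁.length - a) (by omega)
      rw [Nat.sub_add_cancel (by omega), getElem?_append_right le_rfl] at hc
      simp only [Nat.sub_self, getElem?_cons_zero, Option.some.injEq] at hc
      exact hcb hc
    refine .inr (infix_iff_getElem?.2
      ⟨a - l₁.length - 1, by simp only [length_replicate]; omega, fun i hi => ?_⟩)
    simp only [length_replicate] at hi
    have hb := hrun i hi
    rw [getElem?_append_right (by omega),
      show i + a - l₁.length = i + (a - l₁.length - 1) + 1 by omega, getElem?_cons_succ] at hb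
    rw [hb, getElem_replicate]

theorem getLast?_eq_of_isSuffix {u t : List α} (h : u <:+ t) (hu : u ≠ []) :
    u.getLast? = t.getLast? := by
  obtain ⟨w, rfl⟩ := h
  rw [getLast?_append_of_ne_nil _ hu]

theorem eq_nil_of_isPrefix_replicate_of_isSuffix {j : ℕ} {a b : α} {u s t : List α}
    (hab : a ≠ b) (hs : replicate j a <+: s) (ht : t.getLast? = some b) (hus : u <+: s)
    (hut : u <:+ t) (hj : u.length ≤ j) : u = [] := by
  by_contra hu
  have hrep := (prefix_replicate_iff.1 (prefix_of_prefix_length_le hus hs (by simpa))).2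
  have hlast := getLast?_eq_of_isSuffix hut hu
  rw [ht, hrep, getLast?_replicate, if_neg (by simpa using hu)] at hlast
  exact hab (Option.some_injective _ hlast)

theorem eq_zero_of_replicate_append_eq_append_replicate [DecidableEq α] {Q : ℕ} {a b : α}
    {u : List α} (hab : a ≠ b) (h : replicate Q a ++ u = u ++ replicate Q b) : Q = 0 := by
  have hcount := congrArg (count a) h
  simp [count_append, count_replicate, Ne.symm hab] at hcount
  omega

theorem length_eq_of_isPrefix_of_isSuffix_of_replicate [DecidableEq α] {k : ℕ} {a b : α}
    {u s : List α} (hab : a ≠ b) (hs : replicate k a <+: s) (hs' : replicate k b <:+ s)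
    (hpre : u <+: s) (hsuf : u <:+ s) (hlen : s.length ≤ u.length + k) :
    u.length = s.length := by
  obtain ⟨t, ht⟩ := hsuf
  obtain ⟨t', ht'⟩ := hpre
  have h₁ := congrArg length ht
  have h₂ := congrArg length ht'
  simp only [length_append] at h₁ h₂
  have ht₁ : t = replicate t.length a := by
    refine (prefix_replicate_iff.1 (prefix_of_prefix_length_le ⟨u, ht⟩ hs ?_)).2
    simp only [length_replicate]
    omega
  have ht₂ : t' = replicate t.length b := by
    rw [show t.length = t'.length by omega]
    refine (suffix_replicate_iff.1 (suffix_of_suffix_length_le ⟨u, ht'⟩ hs' ?_)).2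
    simp only [length_replicate]
    omega
  rw [ht₁, ← ht', ht₂] at ht
  have := eq_zero_of_replicate_append_eq_append_replicate hab ht
  omega

end List

open List

theorem avoids_replicate_append_append {k : ℕ} (hk : 2 ≤ k) {v : List Bool} (hv : Avoids k v)
    (hhead : v.head? = some false) (hlast : v.getLast? = some true) :
    Avoids k (replicate (k - 1) true ++ v ++ replicate (k - 1) false) := by
  obtain ⟨k, rfl⟩ : ∃ k', k = k' + 2 := ⟨k - 2, by omega⟩
  simp only [show k + 2 - 1 = k + 1 by omega]
  constructor
  · obtain ⟨w, rfl⟩ := getLast?_eq_some_iff.1 hlast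
    have hsplit : replicate (k + 1) true ++ (w ++ [true]) ++ replicate (k + 1) false =
        replicate k true ++ true :: (w ++ true :: replicate (k + 1) false) := by
      simp [replicate_succ']
    rw [hsplit]
    intro h
    rcases replicate_isInfix_append_cons (by decide) h with h | h
    · simpa using h.length_le
    rcases replicate_isInfix_append_cons (by decide) h with h | h
    · exact hv.1 (h.trans (prefix_append _ _).isInfix)
    · simpa using h.length_le
  · obtain ⟨w, rfl⟩ := head?_eq_some_iff.1 hhead
    have hsplit : replicate (k + 1) true ++ false :: w ++ replicate (k + 1) false =
        replicate (k + 1) true ++ false :: (w ++ false :: replicate k false) := by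
      simp [replicate_succ]
    rw [hsplit]
    intro h
    rcases replicate_isInfix_append_cons (by decide) h with h | h
    · simpa using h.length_le
    rcases replicate_isInfix_append_cons (by decide) h with h | h
    · exact hv.2 (h.trans (suffix_cons _ _).isInfix)
    · simpa using h.length_le

theorem eq_nil_of_isPrefix_of_isSuffix_replicate_append_replicate {k : ℕ} {v u : List Bool}
    (hv : ¬ replicate k false <:+: v)
    (hpre : u <+: replicate k true ++ v ++ replicate k false)
    (hsuf : u <:+ replicate k true ++ v ++ replicate k false)
    (hlt : u.length < (replicate k true ++ v ++ replicate k false).length) : u = [] := by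
  set s := replicate k true ++ v ++ replicate k false
  have hslen : s.length = k + v.length + k := by simp only [s, length_append, length_replicate]
  have hones : replicate k true <+: s := (prefix_append _ _).trans (prefix_append _ _)
  have hzeros : replicate k false <:+ s := suffix_append _ _
  by_contra hu
  have hu₁ : 1 ≤ u.length := length_pos_iff.2 hu
  rcases le_or_gt u.length k with hshort | hlong
  · refine hu (eq_nil_of_isPrefix_replicate_of_isSuffix (b := false) (by decide) hones ?_
      hpre hsuf hshort)
    simp [s, getLast?_append, getLast?_replicate, show k ≠ 0 by omega]
  rcases le_or_gt u.length (k + v.length) with hmid | hend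
  · obtain _ | k := k
    · exact hv nil_infix
    have hrun : replicate (k + 1) false <:+ u :=
      suffix_of_suffix_length_le hzeros hsuf (by simpa using hlong.le)
    have hu' : u <+: replicate k true ++ true :: v := by
      rw [← singleton_append, ← append_assoc, ← replicate_succ']
      exact prefix_of_prefix_length_le hpre (prefix_append _ _) (by simpa using hmid)
    rcases replicate_isInfix_append_cons (by decide : true ≠ false)
      (hrun.isInfix.trans hu'.isInfix) with h | h
    · simpa using h.length_le
    · exact hv h
  · have := length_eq_of_isPrefix_of_isSuffix_of_replicate (by decide) hones hzeros hpre hsuf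
      (by omega)
    omega

section

variable {m n k : ℕ}

theorem length_row (A : Fin m → Fin n → Bool) (i : ℕ) : (row A i).length = n := by
  simp [row]

theorem getElem_row {A : Fin m → Fin n → Bool} {i j : ℕ} (hi : i < m)
    (hj : j < (row A i).length) :
    (row A i)[j] = A ⟨i, hi⟩ ⟨j, by simpa [length_row] using hj⟩ := by
  simp [row, hi]

theorem IsOverlap.neg {A B : Fin m → Fin n → Bool} {p q : ℤ} (h : IsOverlap A B p q) :
    IsOverlap B A (-p) (-q) := by
  obtain ⟨hpq, hp, hq, hAB⟩ := h
  refine ⟨by omega, by simpa using hp, by simpa using hq, fun i j i' j' hi hj => ?_⟩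
  exact (hAB i' j' i j (by omega) (by omega)).symm

theorem IsOverlap.exists_isPrefix_isSuffix {A B : Fin m → Fin n → Bool} {p : ℤ} {q : ℕ}
    (h : IsOverlap A B p q) {i i' : ℕ} (hi : i < m) (hi' : i' < m) (hii' : (i' : ℤ) = i + p) :
    ∃ u : List Bool, u.length = n - q ∧ u <+: row A i ∧ u <:+ row B i' := by
  refine ⟨(row A i).take (n - q), by simp [length_row], take_prefix _ _, ?_⟩
  convert drop_suffix q (row B i') using 1
  refine ext_getElem (by simp [length_row]) fun j hj hj' => ?_
  simp only [getElem_take, getElem_drop, getElem_row hi, getElem_row hi']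
  exact h.2.2.2 _ _ _ _ hii' (by push_cast; ring)

namespace SkSet

variable {A : Fin m → Fin n → Bool}

theorem replicate_isPrefix_row_zero (hA : A ∈ SkSet m n k) :
    replicate (k - 1) true <+: row A 0 := by
  obtain ⟨⟨v, -, -, -, -, hrow⟩, -⟩ := hA
  rw [hrow, append_assoc]
  exact prefix_append _ _

theorem replicate_isPrefix_row_last (hA : A ∈ SkSet m n k) :
    replicate k true <+: row A (m - 1) := by
  obtain ⟨-, -, v, -, -, hrow⟩ := hA
  rw [hrow, append_assoc]
  exact prefix_append _ _

theorem replicate_isSuffix_row_last (hA : A ∈ SkSet m n k) :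
    replicate k false <:+ row A (m - 1) := by
  obtain ⟨-, -, v, -, -, hrow⟩ := hA
  rw [hrow]
  exact suffix_append _ _

theorem getLast?_row (hA : A ∈ SkSet m n k) (hk : 2 ≤ k) {i : ℕ} (hi : i < m) :
    (row A i).getLast? = some false := by
  obtain ⟨⟨v, -, -, -, -, hrow₀⟩, hmid, w, -, -, hrow⟩ := hA
  rcases Nat.eq_zero_or_pos i with rfl | hi₀
  · simp [hrow₀, getLast?_append, getLast?_replicate, show k - 1 ≠ 0 by omega]
  rcases Nat.lt_or_ge i (m - 1) with hi₁ | hi₁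
  · exact (hmid i hi₀ (by omega)).2
  · rw [show i = m - 1 by omega, hrow]
    simp [getLast?_append, getLast?_replicate, show k ≠ 0 by omega]

theorem avoids_row (hA : A ∈ SkSet m n k) (hk : 2 ≤ k) {i : ℕ} (hi : i + 1 < m) :
    Avoids k (row A i) := by
  obtain ⟨⟨v, -, hv, hhead, hlast, hrow₀⟩, hmid, -⟩ := hA
  rcases Nat.eq_zero_or_pos i with rfl | hi₀
  · rw [hrow₀]
    exact avoids_replicate_append_append hk hv hhead hlast
  · exact (hmid i hi₀ (by omega)).1

theorem not_isOverlap_zero (hA : A ∈ SkSet m n k) (hm : 0 < m) (hn : 0 < n) {q : ℕ} :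
    ¬ IsOverlap A A 0 q := by
  intro h
  have hq₀ : q ≠ 0 := by simpa using h.1
  have hqn : q ≤ n - 1 := by simpa using h.2.2.1
  obtain ⟨u, hu, hpre, hsuf⟩ :=
    h.exists_isPrefix_isSuffix (i := m - 1) (i' := m - 1) (by omega) (by omega) (by simp)
  obtain ⟨-, -, v, -, hv, hrow⟩ := hA
  rw [hrow] at hpre hsuf
  have hnil := eq_nil_of_isPrefix_of_isSuffix_replicate_append_replicate hv.1 hpre hsuf
    (by rw [← hrow, length_row]; omega)
  simp only [hnil, length_nil] at hu
  omega

theorem not_isOverlap_pos (hA : A ∈ SkSet m n k) (hk : 2 ≤ k) (hn : 0 < n) {p q : ℕ}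
    (hp : 0 < p) : ¬ IsOverlap A A p q := by
  intro h
  have hpm : p ≤ m - 1 := by simpa using h.2.1
  have hqn : q ≤ n - 1 := by simpa using h.2.2.1
  by_cases hwide : k ≤ n - q
  · obtain ⟨u, hu, hpre, hsuf⟩ :=
      h.exists_isPrefix_isSuffix (i := m - 1 - p) (i' := m - 1) (by omega) (by omega) (by omega)
    have hzeros : replicate k false <:+ u :=
      suffix_of_suffix_length_le (replicate_isSuffix_row_last hA) hsuf (by simpa [hu])
    exact (avoids_row hA hk (by omega)).1 (hzeros.isInfix.trans hpre.isInfix)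
  · obtain ⟨u, hu, hpre, hsuf⟩ :=
      h.exists_isPrefix_isSuffix (i := 0) (i' := p) (by omega) (by omega) (by simp)
    have hnil := eq_nil_of_isPrefix_replicate_of_isSuffix (by decide)
      (replicate_isPrefix_row_zero hA) (getLast?_row hA hk (by omega)) hpre hsuf (by omega)
    simp only [hnil, length_nil] at hu
    omega

theorem not_isOverlap_neg (hA : A ∈ SkSet m n k) (hk : 2 ≤ k) (hn : 0 < n) {p q : ℕ}
    (hp : 0 < p) : ¬ IsOverlap A A (-p) q := by
  intro h
  have hpm : p ≤ m - 1 := by simpa using h.2.1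
  have hqn : q ≤ n - 1 := by simpa using h.2.2.1
  obtain ⟨u, hu, hpre, hsuf⟩ :=
    h.exists_isPrefix_isSuffix (i := m - 1) (i' := m - 1 - p) (by omega) (by omega) (by omega)
  by_cases hwide : k ≤ n - q
  · have hones : replicate k true <+: u :=
      prefix_of_prefix_length_le (replicate_isPrefix_row_last hA) hpre (by simpa [hu])
    exact (avoids_row hA hk (by omega)).2 (hones.isInfix.trans hsuf.isInfix)
  · have hnil := eq_nil_of_isPrefix_replicate_of_isSuffix (by decide)
      (replicate_isPrefix_row_last hA) (getLast?_row hA hk (by omega)) hpre hsuf (by omega)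
    simp only [hnil, length_nil] at hu
    omega

end SkSet

end

theorem selfNonOverlapping_of_mem_SkSet_general (m n k : ℕ) (hm : 2 ≤ m) (hk : 3 ≤ k)
    (hn : 2 * k ≤ n)
    (A : Fin m → Fin n → Bool) (hA : A ∈ SkSet m n k) :
    ¬ ∃ p q : ℤ, IsOverlap A A p q := by
  rintro ⟨p, q, h⟩
  wlog hq : 0 ≤ q generalizing p q
  · exact this (-p) (-q) h.neg (by omega)
  lift q to ℕ using hq
  obtain ⟨p, rfl | rfl⟩ := Int.eq_nat_or_neg p <;> rcases p.eq_zero_or_pos with rfl | hp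
  · exact SkSet.not_isOverlap_zero hA (by omega) (by omega) h
  · exact SkSet.not_isOverlap_pos hA (by omega) (by omega) hp h
  · exact SkSet.not_isOverlap_zero hA (by omega) (by omega) (by simpa using h)
  · exact SkSet.not_isOverlap_neg hA (by omega) (by omega) hp h

/-- Every matrix of `S^(k)_{m×n}` is self non-overlapping (unbordered). -/
theorem selfNonOverlapping_of_mem_SkSet (m n k : ℕ) (hm : 2 ≤ m) (hk : 3 ≤ k)
    (hkn : k ≤ n / 2) (hn : 2 * k ≤ n)
    (A : Fin m → Fin n → Bool) (hA : A ∈ SkSet m n k) :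
    ¬ ∃ p q : ℤ, IsOverlap A A p q :=
  selfNonOverlapping_of_mem_SkSet_general m n k hm hk hn A hA
end

section
/- Let m ≥ 2, n ≥ 2k and 3 ≤ k ≤ ⌊n/2⌋. Then S^(k)_{m×n} is a non-overlapping set: every matrix in S^(k)_{m×n} is self non-overlapping, and for any two distinct matrices A, B ∈ S^(k)_{m×n} there is no overlap of B on A. -/
lemma run_infix {l : List Bool} {b : Bool} {t k : ℕ}
    (hk : t + k ≤ l.length) (h : ∀ d, (hd : d < k) → l[t + d]'(by omega) = b) :
    List.replicate k b <:+: l := by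
  have h1 : (l.drop t).take k = List.replicate k b := by
    apply List.ext_getElem
    · simp; omega
    · intro i h2 h3
      rw [List.getElem_take, List.getElem_drop, List.getElem_replicate]
      exact h i (by simpa using h3)
  rw [← h1]
  exact ((l.drop t).take_prefix k).isInfix.trans ((l.drop_suffix t).isInfix)

lemma get?_left (xs v ys : List Bool) (j : ℕ) (hj : j < xs.length) :
    (xs ++ v ++ ys)[j]? = some (xs[j]) := by
  rw [List.getElem?_eq_getElem (by simp only [List.length_append]; omega),
    List.getElem_append_left (by simp only [List.length_append]; omega),
    List.getElem_append_left hj]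

lemma get?_mid (xs v ys : List Bool) (r : ℕ) (hr : r < v.length) :
    (xs ++ v ++ ys)[xs.length + r]? = some (v[r]) := by
  rw [List.getElem?_eq_getElem (by simp only [List.length_append]; omega),
    List.getElem_append_left (bs := ys) (by simp only [List.length_append]; omega),
    List.getElem_append_right (by omega)]
  congr 2
  omega

lemma get?_right (xs v ys : List Bool) (j : ℕ) (hj : j < ys.length) :
    (xs ++ v ++ ys)[xs.length + v.length + j]? = some (ys[j]) := by
  rw [List.getElem?_eq_getElem (by simp only [List.length_append]; omega),
    List.getElem_append_right (by simp only [List.length_append]; omega)]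
  congr 2
  simp only [List.length_append]
  omega

lemma row_length {m n : ℕ} (A : Fin m → Fin n → Bool) (i : ℕ) : (row A i).length = n := by
  simp [row]

lemma row_get? {m n : ℕ} (A : Fin m → Fin n → Bool) {i j : ℕ} (hi : i < m) (hj : j < n) :
    (row A i)[j]? = some (A ⟨i, hi⟩ ⟨j, hj⟩) := by
  rw [List.getElem?_eq_getElem (by rw [row_length]; exact hj)]
  simp [row, hi]

lemma getElem_zero_of_head? {v : List Bool} {b : Bool} (h : v.head? = some b) (h0 : 0 < v.length) :
    v[0]'h0 = b := by
  cases v with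
  | nil => simp at h
  | cons a t => simpa using h

lemma getElem_last_of_getLast? {v : List Bool} {b : Bool} (h : v.getLast? = some b)
    (h0 : 0 < v.length) : v[v.length - 1]'(by omega) = b := by
  rw [List.getLast?_eq_getElem?, List.getElem?_eq_getElem (by omega)] at h
  simpa using h

lemma some_inj' {a b : Bool} (h : some a = some b) : a = b := by simpa using h

structure PFacts (m n k : ℕ) (A : Fin m → Fin n → Bool) : Prop where
  f1 : ∀ (h0 : 0 < m) (j : ℕ) (hj : j < n), j + 1 < k → A ⟨0, h0⟩ ⟨j, hj⟩ = true
  f2 : ∀ (h0 : 0 < m) (hj : n - k < n), A ⟨0, h0⟩ ⟨n - k, hj⟩ = true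
  f3 : ∀ (h0 : 0 < m) (j : ℕ) (hj : j < n), n - k + 1 ≤ j → A ⟨0, h0⟩ ⟨j, hj⟩ = false
  f9 : ∀ (h0 : 0 < m) (hj : k - 1 < n), A ⟨0, h0⟩ ⟨k - 1, hj⟩ = false
  f5 : ∀ (h1 : m - 1 < m) (j : ℕ) (hj : j < n), j < k → A ⟨m - 1, h1⟩ ⟨j, hj⟩ = true
  f6 : ∀ (h1 : m - 1 < m) (j : ℕ) (hj : j < n), n - k ≤ j → A ⟨m - 1, h1⟩ ⟨j, hj⟩ = false
  f4 : ∀ (i : ℕ) (hi : i < m) (hj : n - 1 < n), A ⟨i, hi⟩ ⟨n - 1, hj⟩ = false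
  f7 : ∀ t : ℕ, k ≤ t → t + k ≤ n - k →
        (∀ (h1 : m - 1 < m) (d : ℕ), d < k → ∀ (hj : t + d < n), A ⟨m - 1, h1⟩ ⟨t + d, hj⟩ = false) →
        False
  f8a : ∀ (i t : ℕ) (hi : i < m), i + 2 ≤ m → t + k ≤ n →
        (∀ (d : ℕ), d < k → ∀ (hj : t + d < n), A ⟨i, hi⟩ ⟨t + d, hj⟩ = false) → False
  f8b : ∀ (i t : ℕ) (hi : i < m), i + 2 ≤ m → t + k ≤ n →
        (∀ (d : ℕ), d < k → ∀ (hj : t + d < n), A ⟨i, hi⟩ ⟨t + d, hj⟩ = true) → False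

lemma pfacts {m n k : ℕ} (hm : 2 ≤ m) (hk : 3 ≤ k) (hn : 2*k ≤ n)
    {A : Fin m → Fin n → Bool} (hA : A ∈ SkSet m n k) : PFacts m n k A := by
  obtain ⟨⟨v, hvl, hvav, hvh, hvt, hrow⟩, hmid, w, hwl, hwav, hlast⟩ := hA
  have h0m : 0 < m := by omega
  have h1m : m - 1 < m := by omega
  -- value of row 0 at a position inside v
  have hv0 : ∀ (r : ℕ) (hr : r < v.length) (hj : k - 1 + r < n),
      A ⟨0, h0m⟩ ⟨k - 1 + r, hj⟩ = v[r] := by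
    intro r hr hj
    have e1 := row_get? A h0m hj
    rw [hrow] at e1
    have e2 := get?_mid (List.replicate (k-1) true) v (List.replicate (k-1) false) r hr
    simp only [List.length_replicate] at e2
    exact some_inj' (e1.symm.trans e2)
  -- value of last row at a position inside w
  have hw0 : ∀ (r : ℕ) (hr : r < w.length) (hj : k + r < n),
      A ⟨m - 1, h1m⟩ ⟨k + r, hj⟩ = w[r] := by
    intro r hr hj
    have e1 := row_get? A h1m hj
    rw [hlast] at e1
    have e2 := get?_mid (List.replicate k true) w (List.replicate k false) r hr
    simp only [List.length_replicate] at e2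
    exact some_inj' (e1.symm.trans e2)
  have hf1 : ∀ (h0 : 0 < m) (j : ℕ) (hj : j < n), j + 1 < k → A ⟨0, h0⟩ ⟨j, hj⟩ = true := by
    intro h0 j hj hjk
    have e1 := row_get? A h0 hj
    rw [hrow] at e1
    have e2 := get?_left (List.replicate (k-1) true) v (List.replicate (k-1) false) j
      (by simp only [List.length_replicate]; omega)
    rw [List.getElem_replicate] at e2
    exact some_inj' (e1.symm.trans e2)
  have hf2 : ∀ (h0 : 0 < m) (hj : n - k < n), A ⟨0, h0⟩ ⟨n - k, hj⟩ = true := by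
    intro h0 hj
    have hr : v.length - 1 < v.length := by omega
    have := hv0 (v.length - 1) hr (by omega)
    rw [getElem_last_of_getLast? hvt (by omega)] at this
    have h4 : (⟨k - 1 + (v.length - 1), by omega⟩ : Fin n) = ⟨n - k, hj⟩ := Fin.ext (by simp; omega)
    rw [h4] at this
    exact this
  have hf9 : ∀ (h0 : 0 < m) (hj : k - 1 < n), A ⟨0, h0⟩ ⟨k - 1, hj⟩ = false := by
    intro h0 hj
    have := hv0 0 (by omega) (by omega)
    rw [getElem_zero_of_head? hvh (by omega)] at this
    have h4 : (⟨k - 1 + 0, by omega⟩ : Fin n) = ⟨k - 1, hj⟩ := Fin.ext (by simp)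
    rw [h4] at this
    exact this
  have hf3 : ∀ (h0 : 0 < m) (j : ℕ) (hj : j < n), n - k + 1 ≤ j → A ⟨0, h0⟩ ⟨j, hj⟩ = false := by
    intro h0 j hj hjk
    have e1 := row_get? A h0 hj
    rw [hrow] at e1
    have e2 := get?_right (List.replicate (k-1) true) v (List.replicate (k-1) false)
      (j - (n - k + 1)) (by simp only [List.length_replicate]; omega)
    simp only [List.length_replicate, List.getElem_replicate] at e2
    rw [show k - 1 + v.length + (j - (n - k + 1)) = j by omega] at e2
    exact some_inj' (e1.symm.trans e2)
  have hf5 : ∀ (h1 : m - 1 < m) (j : ℕ) (hj : j < n), j < k → A ⟨m - 1, h1⟩ ⟨j, hj⟩ = true := by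
    intro h1 j hj hjk
    have e1 := row_get? A h1 hj
    rw [hlast] at e1
    have e2 := get?_left (List.replicate k true) w (List.replicate k false) j
      (by simp only [List.length_replicate]; omega)
    rw [List.getElem_replicate] at e2
    exact some_inj' (e1.symm.trans e2)
  have hf6 : ∀ (h1 : m - 1 < m) (j : ℕ) (hj : j < n), n - k ≤ j → A ⟨m - 1, h1⟩ ⟨j, hj⟩ = false := by
    intro h1 j hj hjk
    have e1 := row_get? A h1 hj
    rw [hlast] at e1
    have e2 := get?_right (List.replicate k true) w (List.replicate k false)
      (j - (n - k)) (by simp only [List.length_replicate]; omega)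
    simp only [List.length_replicate, List.getElem_replicate] at e2
    rw [show k + w.length + (j - (n - k)) = j by omega] at e2
    exact some_inj' (e1.symm.trans e2)
  have hf4 : ∀ (i : ℕ) (hi : i < m) (hj : n - 1 < n), A ⟨i, hi⟩ ⟨n - 1, hj⟩ = false := by
    intro i hi hj
    rcases Nat.eq_zero_or_pos i with h | h
    · subst h; exact hf3 hi (n-1) hj (by omega)
    rcases eq_or_lt_of_le (Nat.succ_le_of_lt hi) with h2 | h2
    · have : i = m - 1 := by omega
      subst this; exact hf6 hi (n-1) hj (by omega)
    · have hmi := (hmid i (by omega) (by omega)).2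
      rw [List.getLast?_eq_getElem?, row_length] at hmi
      have e1 := row_get? A hi (show n - 1 < n by omega)
      exact some_inj' (e1.symm.trans hmi)
  refine ⟨hf1, hf2, hf3, hf9, hf5, hf6, hf4, ?_, ?_, ?_⟩
  · -- f7
    intro t ht1 ht2 hall
    apply hwav.1
    apply run_infix (t := t - k) (by omega)
    intro d hd
    rw [← hw0 (t - k + d) (by omega) (by omega)]
    have h4 : (⟨k + (t - k + d), by omega⟩ : Fin n) = ⟨t + d, by omega⟩ := Fin.ext (by simp; omega)
    rw [h4]
    exact hall h1m d hd _
  · -- f8a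
    intro i t hi him ht hall
    rcases Nat.eq_zero_or_pos i with h | h
    · subst h
      by_cases hc1 : t + 1 < k
      · have := hall 0 (by omega) (by omega)
        simp only [Nat.add_zero] at this
        rw [hf1 hi t (by omega) (by omega)] at this; exact Bool.noConfusion this
      by_cases hc2 : n - 2*k + 1 ≤ t
      · have := hall (n - k - t) (by omega) (by omega)
        have h4 : (⟨t + (n - k - t), by omega⟩ : Fin n) = ⟨n - k, by omega⟩ :=
          Fin.ext (by simp; omega)
        rw [h4, hf2 hi (by omega)] at this; exact Bool.noConfusion this
      · apply hvav.1
        apply run_infix (t := t - (k - 1)) (by omega)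
        intro d hd
        rw [← hv0 (t - (k - 1) + d) (by omega) (by omega)]
        have h4 : (⟨k - 1 + (t - (k - 1) + d), by omega⟩ : Fin n) = ⟨t + d, by omega⟩ :=
          Fin.ext (by simp; omega)
        rw [h4]
        exact hall d hd _
    · apply (hmid i (by omega) (by omega)).1.1
      apply run_infix (t := t) (by rw [row_length]; omega)
      intro d hd
      have e1 := row_get? A hi (show t + d < n by omega)
      rw [List.getElem?_eq_getElem (by rw [row_length]; omega)] at e1
      rw [some_inj' e1]
      exact hall d hd _
  · -- f8b
    intro i t hi him ht hall
    rcases Nat.eq_zero_or_pos i with h | h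
    · subst h
      by_cases hc1 : n - 2*k + 2 ≤ t
      · have := hall (n - k + 1 - t) (by omega) (by omega)
        have h4 : (⟨t + (n - k + 1 - t), by omega⟩ : Fin n) = ⟨n - k + 1, by omega⟩ :=
          Fin.ext (by simp; omega)
        rw [h4, hf3 hi (n - k + 1) (by omega) (by omega)] at this; exact Bool.noConfusion this
      by_cases hc2 : t ≤ k - 1
      · have := hall (k - 1 - t) (by omega) (by omega)
        have h4 : (⟨t + (k - 1 - t), by omega⟩ : Fin n) = ⟨k - 1, by omega⟩ :=
          Fin.ext (by simp; omega)
        rw [h4, hf9 hi (by omega)] at this; exact Bool.noConfusion this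
      · apply hvav.2
        apply run_infix (t := t - (k - 1)) (by omega)
        intro d hd
        rw [← hv0 (t - (k - 1) + d) (by omega) (by omega)]
        have h4 : (⟨k - 1 + (t - (k - 1) + d), by omega⟩ : Fin n) = ⟨t + d, by omega⟩ :=
          Fin.ext (by simp; omega)
        rw [h4]
        exact hall d hd _
    · apply (hmid i (by omega) (by omega)).1.2
      apply run_infix (t := t) (by rw [row_length]; omega)
      intro d hd
      have e1 := row_get? A hi (show t + d < n by omega)
      rw [List.getElem?_eq_getElem (by rw [row_length]; omega)] at e1
      rw [some_inj' e1]
      exact hall d hd _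



lemma overlap_symm {m n : ℕ} {A B : Fin m → Fin n → Bool} {p q : ℤ}
    (h : IsOverlap A B p q) : IsOverlap B A (-p) (-q) := by
  obtain ⟨hne, hp, hq, hmatch⟩ := h
  refine ⟨fun ⟨h1, h2⟩ => hne ⟨by omega, by omega⟩, by simpa using hp, by simpa using hq, ?_⟩
  intro i j i' j' hi hj
  exact (hmatch i' j' i j (by omega) (by omega)).symm


lemma core {m n k : ℕ} (hm : 2 ≤ m) (hk : 3 ≤ k) (hn : 2*k ≤ n)
    {A B : Fin m → Fin n → Bool} (hFA : PFacts m n k A) (hFB : PFacts m n k B)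
    (p q : ℤ) (hov : IsOverlap A B p q) (hpos : 0 < p ∨ (p = 0 ∧ 0 < q)) : False := by
  obtain ⟨hne, hpb, hqb, hmatch⟩ := hov
  have h1m : m - 1 < m := by omega
  rcases hpos with hp | ⟨hp0, hq0⟩
  · -- p ≥ 1
    set pn := p.natAbs with hpndef
    have hpz : (pn : ℤ) = p := by omega
    have hpn1 : 1 ≤ pn := by omega
    have hpn2 : pn ≤ m - 1 := hpb
    set qn := q.natAbs with hqndef
    have hqn2 : qn ≤ n - 1 := hqb
    rcases le_or_gt 0 q with hq | hq
    · have hqz : (qn : ℤ) = q := by omega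
      rcases le_or_gt qn (n - k) with hc | hc
      · -- 0 ≤ qn ≤ n-k : 0^k pulled into row m-1-pn of A
        apply hFA.f8a (m - 1 - pn) (n - k - qn) (by omega) (by omega) (by omega)
        intro d hd hj
        have e := hmatch ⟨m - 1 - pn, by omega⟩ ⟨n - k - qn + d, hj⟩ ⟨m - 1, h1m⟩
          ⟨n - k + d, by omega⟩ (by simp only [Fin.val_mk]; omega)
          (by simp only [Fin.val_mk]; omega)
        rw [e]
        exact hFB.f6 h1m (n - k + d) (by omega) (by omega)
      · -- qn > n-k : window narrow
        have e := hmatch ⟨0, by omega⟩ ⟨n - 1 - qn, by omega⟩ ⟨pn, by omega⟩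
          ⟨n - 1, by omega⟩ (by simp only [Fin.val_mk]; omega)
          (by simp only [Fin.val_mk]; omega)
        rw [hFA.f1 (by omega) (n - 1 - qn) (by omega) (by omega),
          hFB.f4 pn (by omega) (by omega)] at e
        exact Bool.noConfusion e
    · have hqz : (qn : ℤ) = -q := by omega
      have hqn1 : 1 ≤ qn := by omega
      rcases le_or_gt qn (n - k) with hc | hc
      · -- 1^k pulled into row m-1-pn of A
        apply hFA.f8b (m - 1 - pn) qn (by omega) (by omega) (by omega)
        intro d hd hj
        have e := hmatch ⟨m - 1 - pn, by omega⟩ ⟨qn + d, hj⟩ ⟨m - 1, h1m⟩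
          ⟨d, by omega⟩ (by simp only [Fin.val_mk]; omega)
          (by simp only [Fin.val_mk]; omega)
        rw [e]
        exact hFB.f5 h1m d (by omega) (by omega)
      · have e := hmatch ⟨m - 1 - pn, by omega⟩ ⟨n - 1, by omega⟩ ⟨m - 1, h1m⟩
          ⟨n - 1 - qn, by omega⟩ (by simp only [Fin.val_mk]; omega)
          (by simp only [Fin.val_mk]; omega)
        rw [hFA.f4 (m - 1 - pn) (by omega) (by omega),
          hFB.f5 h1m (n - 1 - qn) (by omega) (by omega)] at e
        exact Bool.noConfusion e
  · -- p = 0, q ≥ 1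
    set qn := q.natAbs with hqndef
    have hqz : (qn : ℤ) = q := by omega
    have hqn1 : 1 ≤ qn := by omega
    have hqn2 : qn ≤ n - 1 := hqb
    by_cases hc1 : qn ≤ k - 1
    · -- small shift: first rows
      have e := hmatch ⟨0, by omega⟩ ⟨n - k, by omega⟩ ⟨0, by omega⟩
        ⟨n - k + qn, by omega⟩ (by simp only [Fin.val_mk]; omega)
        (by simp only [Fin.val_mk]; omega)
      rw [hFA.f2 (by omega) (by omega),
        hFB.f3 (by omega) (n - k + qn) (by omega) (by omega)] at e
      exact Bool.noConfusion e
    by_cases hc2 : n - k ≤ qn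
    · have e := hmatch ⟨m - 1, h1m⟩ ⟨0, by omega⟩ ⟨m - 1, h1m⟩
        ⟨qn, by omega⟩ (by simp only [Fin.val_mk]; omega)
        (by simp only [Fin.val_mk]; omega)
      rw [hFA.f5 h1m 0 (by omega) (by omega),
        hFB.f6 h1m qn (by omega) (by omega)] at e
      exact Bool.noConfusion e
    · -- k ≤ qn ≤ n-k-1 : last rows, 0^k run
      have hrun : ∀ (d : ℕ), d < k → ∀ (hj : n - k - qn + d < n),
          A ⟨m - 1, h1m⟩ ⟨n - k - qn + d, hj⟩ = false := by
        intro d hd hj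
        have e := hmatch ⟨m - 1, h1m⟩ ⟨n - k - qn + d, hj⟩ ⟨m - 1, h1m⟩
          ⟨n - k + d, by omega⟩ (by simp only [Fin.val_mk]; omega)
          (by simp only [Fin.val_mk]; omega)
        rw [e]
        exact hFB.f6 h1m (n - k + d) (by omega) (by omega)
      by_cases hc3 : n - k - qn ≤ k - 1
      · have := hrun 0 (by omega) (by omega)
        simp only [Nat.add_zero] at this
        rw [hFA.f5 h1m (n - k - qn) (by omega) (by omega)] at this
        exact Bool.noConfusion this
      · exact hFA.f7 (n - k - qn) (by omega) (by omega) (fun h1 d hd hj => hrun d hd hj)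


/-- `S^(k)_{m×n}` is a non-overlapping set: every matrix in it is self
non-overlapping, and no two distinct matrices of it admit an overlap. -/
theorem SkSet_nonOverlapping (m n k : ℕ) (hm : 2 ≤ m) (hk : 3 ≤ k)
    (hkn : k ≤ n / 2) (hn : 2 * k ≤ n) :
    (∀ A ∈ SkSet m n k, ¬ ∃ p q : ℤ, IsOverlap A A p q) ∧
    (∀ A ∈ SkSet m n k, ∀ B ∈ SkSet m n k, A ≠ B → ¬ ∃ p q : ℤ, IsOverlap A B p q) := by
  have key : ∀ A ∈ SkSet m n k, ∀ B ∈ SkSet m n k, ∀ p q : ℤ, ¬ IsOverlap A B p q := by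
    intro A hA B hB p q hov
    have hFA := pfacts hm hk hn hA
    have hFB := pfacts hm hk hn hB
    rcases lt_trichotomy 0 p with h | h | h
    · exact core hm hk hn hFA hFB p q hov (Or.inl h)
    · rcases lt_trichotomy 0 q with h2 | h2 | h2
      · exact core hm hk hn hFA hFB p q hov (Or.inr ⟨h.symm, h2⟩)
      · exact hov.1 ⟨h.symm, h2.symm⟩
      · exact core hm hk hn hFB hFA (-p) (-q) (overlap_symm hov) (Or.inr ⟨by omega, by omega⟩)
    · exact core hm hk hn hFB hFA (-p) (-q) (overlap_symm hov) (Or.inl (by omega))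
  constructor
  · rintro A hA ⟨p, q, hov⟩
    exact key A hA A hA p q hov
  · rintro A hA B hB _ ⟨p, q, hov⟩
    exact key A hA B hB p q hov
end

section
/- Let k ≥ 3. Then r_0^(k) = 1, r_1^(k) = 0, r_j^(k) = 2^{j−2} for 2 ≤ j ≤ k, and for all n ≥ k+1, r_n^(k) = Σ_{h=2}^{k} (h−1)·r_{n−h}^(k) + Σ_{h=k+1}^{2k−2} (2k−h−1)·r_{n−h}^(k), where by convention r_j^(k) = 0 for j < 0. -/
/-- `rcount k n = r_n^(k)`: the number of binary strings of length `n` starting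
with 0, ending with 1 and avoiding `0^k` and `1^k` (the empty string counts,
so `rcount k 0 = 1`). -/
noncomputable def rcount (k n : ℕ) : ℕ :=
  Set.ncard {s : List Bool | s.length = n ∧ Avoids k s ∧
    s.head? ≠ some true ∧ s.getLast? ≠ some false}
/-- `r_n^(k)` extended to integer indices by the convention `r_j^(k) = 0` for `j < 0`. -/
noncomputable def rZ (k : ℕ) (n : ℤ) : ℤ :=
  if n < 0 then 0 else rcount k n.toNat


/-!
For `n ≥ 1`, a string counted by `r_n` starts with a maximal run `0^a` followed by a maximal
run `1^b`, where `1 ≤ a, b ≤ k - 1`, and what remains is again a string counted by `r_{n-a-b}`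
(it is empty or starts with 0, and it ends with 1 unless empty). Conversely every such
concatenation is counted by `r_n`, and the decomposition is unique, so
`r_n = ∑_{1 ≤ a, b ≤ k-1} r_{n-a-b}`. Grouping by `h = a + b`, the value `h` is attained by
`min (h - 1) (2k - 1 - h)` pairs, which gives the two sums of the recurrence.
-/

namespace List

variable {α : Type*} {c d : α} {k m : ℕ} {t : List α}

theorem head?_replicate_append (hm : m ≠ 0) (c : α) (t : List α) :
    (replicate m c ++ t).head? = some c := by
  simp [head?_replicate, hm]

theorem le_of_replicate_prefix_replicate_append (ht : t.head? ≠ some c)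
    (h : replicate k c <+: replicate m c ++ t) : k ≤ m := by
  by_contra! hmk
  rw [← Nat.add_sub_cancel' hmk.le, ← replicate_append_replicate, prefix_append_right_inj] at h
  obtain ⟨u, rfl⟩ := h
  exact ht (by simpa using head?_replicate_append (Nat.sub_ne_zero_of_lt hmk) c u)

theorem replicate_infix_of_infix_replicate_append_of_lt (hmk : m < k) (ht : t.head? ≠ some c)
    (h : replicate k c <:+: replicate m c ++ t) : replicate k c <:+: t := by
  induction m with
  | zero => simpa using h
  | succ m ih =>
    rw [replicate_succ, cons_append] at h
    rcases infix_cons_iff.mp h with hp | hi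
    · rw [← cons_append, ← replicate_succ] at hp
      exact absurd (le_of_replicate_prefix_replicate_append ht hp) (by omega)
    · exact ih (by omega) hi

theorem replicate_infix_of_infix_replicate_append_of_ne (hk : k ≠ 0) (hdc : d ≠ c)
    (h : replicate k c <:+: replicate m d ++ t) : replicate k c <:+: t := by
  induction m with
  | zero => simpa using h
  | succ m ih =>
    rw [replicate_succ, cons_append] at h
    rcases infix_cons_iff.mp h with hp | hi
    · obtain ⟨j, rfl⟩ := Nat.exists_eq_succ_of_ne_zero hk
      exact absurd (cons_prefix_cons.mp hp).1 hdc.symm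
    · exact ih hi

theorem exists_replicate_append (c : α) :
    ∀ s : List α, ∃ a t, s = replicate a c ++ t ∧ t.head? ≠ some c
  | [] => ⟨0, [], rfl, by simp⟩
  | x :: u => by
    by_cases hx : x = c
    · obtain ⟨a, t, rfl, ht⟩ := exists_replicate_append c u
      exact ⟨a + 1, t, by rw [hx, replicate_succ, cons_append], ht⟩
    · exact ⟨0, x :: u, rfl, by simpa using hx⟩

theorem eq_of_replicate_append_eq_of_le {a a' : ℕ} {u u' : List α} (ha : a ≤ a')
    (hu : u.head? ≠ some c) (h : replicate a c ++ u = replicate a' c ++ u') : a = a' := by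
  obtain ⟨d, rfl⟩ := Nat.exists_eq_add_of_le ha
  rw [← replicate_append_replicate, append_assoc, append_cancel_left_eq] at h
  cases d with
  | zero => rfl
  | succ d => exact absurd (h ▸ head?_replicate_append d.succ_ne_zero c u') hu

theorem replicate_append_inj {a a' : ℕ} {u u' : List α} (hu : u.head? ≠ some c)
    (hu' : u'.head? ≠ some c) (h : replicate a c ++ u = replicate a' c ++ u') :
    a = a' ∧ u = u' := by
  obtain rfl : a = a' := (le_total a a').elim (eq_of_replicate_append_eq_of_le · hu h)
    (fun ha => (eq_of_replicate_append_eq_of_le ha hu' h.symm).symm)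
  exact ⟨rfl, append_cancel_left h⟩

theorem ncard_setOf_length_eq (α : Type*) [Fintype α] (m : ℕ) :
    {u : List α | u.length = m}.ncard = Fintype.card α ^ m := by
  rw [← Nat.card_coe_set_eq, ← card_vector, ← Nat.card_eq_fintype_card]
  rfl

end List

section
open Finset

theorem sum_Icc_sum_Icc_add (k : ℕ) (f : ℕ → ℤ) :
    ∑ a ∈ Icc 1 (k - 1), ∑ b ∈ Icc 1 (k - 1), f (a + b) =
      ∑ h ∈ Icc 2 k, ((h : ℤ) - 1) * f h
        + ∑ h ∈ Icc (k + 1) (2 * k - 2), (2 * (k : ℤ) - h - 1) * f h := by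
  calc ∑ a ∈ Icc 1 (k - 1), ∑ b ∈ Icc 1 (k - 1), f (a + b)
      = ∑ a ∈ Icc 1 (k - 1), ∑ h ∈ Icc (a + 1) (a + (k - 1)), f h := by
        refine sum_congr rfl fun a _ => ?_
        rw [← map_add_left_Icc, sum_map]
        rfl
    _ = ∑ h ∈ Icc 2 k ∪ Icc (k + 1) (2 * k - 2),
          ∑ _a ∈ Icc (max 1 (h + 1 - k)) (min (k - 1) (h - 1)), f h :=
        sum_comm' fun a h => by simp only [mem_Icc, mem_union]; omega
    _ = _ := by
        rw [sum_union (disjoint_left.mpr fun h => by simp only [mem_Icc]; omega)]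
        congr 1 <;> refine sum_congr rfl fun h hh => ?_ <;>
          rw [mem_Icc] at hh <;> rw [sum_const, Nat.card_Icc, nsmul_eq_mul] <;> congr 1 <;> omega

end

open List

theorem avoids_iff {k : ℕ} {s : List Bool} : Avoids k s ↔ ∀ c, ¬ replicate k c <:+: s := by
  rw [Avoids, Bool.forall_bool]

theorem Avoids.of_infix {k : ℕ} {s t : List Bool} (h : Avoids k s) (ht : t <:+: s) :
    Avoids k t :=
  avoids_iff.mpr fun c hc => avoids_iff.mp h c (hc.trans ht)

theorem Avoids.lt_of_replicate_infix {k a : ℕ} {c : Bool} {s : List Bool} (h : Avoids k s)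
    (ha : replicate a c <:+: s) : a < k := by
  by_contra! hka
  exact avoids_iff.mp h c ((infix_replicate_iff.mpr (by simpa using hka)).trans ha)

theorem avoids_of_length_le {k : ℕ} {s : List Bool} (hs : s.length ≤ k)
    (hne : s.head? ≠ s.getLast?) : Avoids k s :=
  avoids_iff.mpr fun c hc => by
    rw [← hc.eq_of_length (le_antisymm (by simpa using hc.length_le) (by simpa using hs))] at hne
    simp [head?_replicate, getLast?_replicate] at hne

theorem avoids_replicate_append_replicate_append {k a b : ℕ} {t : List Bool} (ha : a < k)
    (hb : b < k) (hb0 : b ≠ 0) (ht : t.head? ≠ some true) (h : Avoids k t) :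
    Avoids k (replicate a false ++ replicate b true ++ t) := by
  have hk : k ≠ 0 := by omega
  have hbt : (replicate b true ++ t).head? ≠ some false := by
    simp [head?_replicate_append hb0]
  rw [append_assoc]
  constructor
  · exact fun h0 => h.1 <| replicate_infix_of_infix_replicate_append_of_ne hk (by decide) <|
      replicate_infix_of_infix_replicate_append_of_lt ha hbt h0
  · exact fun h1 => h.2 <| replicate_infix_of_infix_replicate_append_of_lt hb ht <|
      replicate_infix_of_infix_replicate_append_of_ne hk (by decide) h1

/-- Indexed by `ℤ`, so that, like `rZ`, it vanishes for `n < 0`. -/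
def rStrings (k : ℕ) (n : ℤ) : Set (List Bool) :=
  {s | (s.length : ℤ) = n ∧ Avoids k s ∧ s.head? ≠ some true ∧ s.getLast? ≠ some false}

theorem rStrings_finite (k : ℕ) (n : ℤ) : (rStrings k n).Finite :=
  (List.finite_length_eq Bool n.toNat).subset fun s hs => show s.length = n.toNat by
    have := hs.1; omega

theorem rZ_eq_ncard (k : ℕ) (n : ℤ) : rZ k n = (rStrings k n).ncard := by
  unfold rZ rcount
  split_ifs with hn
  · rw [Set.eq_empty_of_forall_notMem (s := rStrings k n) fun s hs => by have := hs.1; omega,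
      Set.ncard_empty, Nat.cast_zero]
  · congr 3
    ext s
    exact and_congr_left' (by omega)

def prependRuns (a b : ℕ) (t : List Bool) : List Bool :=
  replicate a false ++ replicate b true ++ t

theorem prependRuns_injective (a b : ℕ) : Function.Injective (prependRuns a b) :=
  fun _ _ h => append_cancel_left h

theorem getLast?_prependRuns {a b : ℕ} (hb : b ≠ 0) (t : List Bool) :
    (prependRuns a b t).getLast? = t.getLast?.or (some true) := by
  simp [prependRuns, getLast?_append, getLast?_replicate, hb]

theorem prependRuns_inj {a b a' b' : ℕ} {t t' : List Bool} (hb : b ≠ 0) (hb' : b' ≠ 0)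
    (ht : t.head? ≠ some true) (ht' : t'.head? ≠ some true)
    (h : prependRuns a b t = prependRuns a' b' t') : a = a' ∧ b = b' ∧ t = t' := by
  simp only [prependRuns, append_assoc] at h
  obtain ⟨rfl, hbt⟩ := replicate_append_inj (by simp [head?_replicate_append hb])
    (by simp [head?_replicate_append hb']) h
  obtain ⟨rfl, rfl⟩ := replicate_append_inj ht ht' hbt
  exact ⟨rfl, rfl, rfl⟩

theorem prependRuns_mem_rStrings {k a b : ℕ} {n : ℤ} {t : List Bool}
    (ha : a ∈ Finset.Icc 1 (k - 1)) (hb : b ∈ Finset.Icc 1 (k - 1))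
    (ht : t ∈ rStrings k (n - a - b)) : prependRuns a b t ∈ rStrings k n := by
  rw [Finset.mem_Icc] at ha hb
  obtain ⟨hlen, hav, hhead, hlast⟩ := ht
  refine ⟨by simp [prependRuns]; omega,
    avoids_replicate_append_replicate_append (by omega) (by omega) (by omega) hhead hav,
    by simp [prependRuns, append_assoc, head?_replicate_append (by omega : a ≠ 0)], ?_⟩
  rw [getLast?_prependRuns (by omega)]
  cases h : t.getLast? with
  | none => simp
  | some x => simpa [h] using hlast

theorem exists_prependRuns_eq_of_mem_rStrings {k : ℕ} {n : ℤ} {s : List Bool} (hn : 1 ≤ n)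
    (hs : s ∈ rStrings k n) : ∃ a ∈ Finset.Icc 1 (k - 1), ∃ b ∈ Finset.Icc 1 (k - 1),
      ∃ t ∈ rStrings k (n - a - b), prependRuns a b t = s := by
  obtain ⟨hlen, hav, hhead, hlast⟩ := hs
  obtain ⟨a, u, rfl, hu⟩ := exists_replicate_append false s
  have ha : a ≠ 0 := by
    rintro rfl
    rcases u with _ | ⟨_ | _, _⟩ <;> simp_all
    omega
  obtain ⟨b, t, rfl, ht⟩ := exists_replicate_append true u
  have hb : b ≠ 0 := by
    rintro rfl
    rcases t with _ | ⟨_ | _, _⟩ <;> simp_all [getLast?_replicate]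
  rw [← append_assoc] at hav hlen hlast
  refine ⟨a, ?_, b, ?_, t, ⟨?_, hav.of_infix (suffix_append _ _).isInfix, ht, ?_⟩,
    append_assoc _ _ _⟩
  · have := hav.lt_of_replicate_infix (by rw [append_assoc]; exact (prefix_append _ _).isInfix)
    simp only [Finset.mem_Icc]; omega
  · have := hav.lt_of_replicate_infix (infix_append _ _ _)
    simp only [Finset.mem_Icc]; omega
  · simp at hlen; omega
  · intro h
    rw [← prependRuns, getLast?_prependRuns hb, h] at hlast
    simp at hlast

theorem rStrings_eq_biUnion {k : ℕ} {n : ℤ} (hn : 1 ≤ n) :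
    rStrings k n = ⋃ p ∈ Finset.Icc 1 (k - 1) ×ˢ Finset.Icc 1 (k - 1),
      prependRuns p.1 p.2 '' rStrings k (n - p.1 - p.2) := by
  ext s
  simp only [Set.mem_iUnion, Set.mem_image, Finset.mem_product, exists_prop, Prod.exists]
  constructor
  · intro hs
    obtain ⟨a, ha, b, hb, t, ht, rfl⟩ := exists_prependRuns_eq_of_mem_rStrings hn hs
    exact ⟨a, b, ⟨ha, hb⟩, t, ht, rfl⟩
  · rintro ⟨a, b, ⟨ha, hb⟩, t, ht, rfl⟩
    exact prependRuns_mem_rStrings ha hb ht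

theorem rZ_eq_sum_sum {k : ℕ} {n : ℤ} (hn : 1 ≤ n) :
    rZ k n = ∑ a ∈ Finset.Icc 1 (k - 1), ∑ b ∈ Finset.Icc 1 (k - 1), rZ k (n - a - b) := by
  have hdisj : (↑(Finset.Icc 1 (k - 1) ×ˢ Finset.Icc 1 (k - 1)) : Set (ℕ × ℕ)).PairwiseDisjoint
      fun p => prependRuns p.1 p.2 '' rStrings k (n - p.1 - p.2) := by
    rintro ⟨a, b⟩ hp ⟨a', b'⟩ hq hne
    simp only [Finset.coe_product, Set.mem_prod, Finset.mem_coe, Finset.mem_Icc] at hp hq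
    refine Set.disjoint_left.mpr ?_
    rintro _ ⟨t, ht, rfl⟩ ⟨t', ht', h⟩
    obtain ⟨rfl, rfl, -⟩ := prependRuns_inj (by omega) (by omega) ht.2.2.1 ht'.2.2.1 h.symm
    exact hne rfl
  rw [rZ_eq_ncard, rStrings_eq_biUnion hn, ← Finset.set_biUnion_coe,
    Set.Finite.ncard_biUnion (Finset.finite_toSet _) (fun p _ => (rStrings_finite k _).image _)
      hdisj, finsum_mem_coe_finset, Finset.sum_product]
  push_cast
  refine Finset.sum_congr rfl fun a _ => Finset.sum_congr rfl fun b _ => ?_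
  rw [Set.ncard_image_of_injective _ (prependRuns_injective a b), rZ_eq_ncard]

theorem rZ_recurrence (k : ℕ) {n : ℤ} (hn : 1 ≤ n) :
    rZ k n = ∑ h ∈ Finset.Icc 2 k, ((h : ℤ) - 1) * rZ k (n - h)
      + ∑ h ∈ Finset.Icc (k + 1) (2 * k - 2), (2 * (k : ℤ) - h - 1) * rZ k (n - h) := by
  rw [rZ_eq_sum_sum hn, ← sum_Icc_sum_Icc_add]
  refine Finset.sum_congr rfl fun a _ => Finset.sum_congr rfl fun b _ => ?_
  rw [Nat.cast_add, sub_add_eq_sub_sub]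

theorem rStrings_zero {k : ℕ} (hk : k ≠ 0) : rStrings k 0 = {[]} := by
  ext s
  refine ⟨fun hs => length_eq_zero_iff.mp (by have := hs.1; omega), ?_⟩
  rintro rfl
  exact ⟨rfl, avoids_iff.mpr fun c h => by simp [hk] at h, by simp, by simp⟩

theorem rStrings_one (k : ℕ) : rStrings k 1 = ∅ := by
  refine Set.eq_empty_of_forall_notMem fun s ⟨hlen, _, hhead, hlast⟩ => ?_
  obtain ⟨x, rfl⟩ := length_eq_one_iff.mp (show s.length = 1 by omega)
  cases x <;> simp_all

theorem rStrings_of_le {k j : ℕ} (hj : 2 ≤ j) (hjk : j ≤ k) :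
    rStrings k j = (fun u => false :: u ++ [true]) '' {u | u.length = j - 2} := by
  ext s
  constructor
  · rintro ⟨hlen, -, hhead, hlast⟩
    rcases eq_nil_or_concat' s with rfl | ⟨s, y, rfl⟩
    · simp at hlen; omega
    rcases s with _ | ⟨x, u⟩
    · simp at hlen; omega
    refine ⟨u, show u.length = j - 2 by simp at hlen; omega, ?_⟩
    cases x <;> cases y <;> simp_all [getLast?_cons]
  · rintro ⟨u, hu, rfl⟩
    have hu : u.length = j - 2 := hu
    exact ⟨by simp; omega, avoids_of_length_le (by simp; omega) (by simp [getLast?_cons]),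
      by simp, by simp [getLast?_cons]⟩

/-- Initial values and the first recurrence for `r_n^(k)`. -/
theorem rcount_recurrence (k : ℕ) (hk : 3 ≤ k) :
    rZ k 0 = 1 ∧ rZ k 1 = 0 ∧
    (∀ j : ℕ, 2 ≤ j → j ≤ k → rZ k j = 2 ^ (j - 2)) ∧
    (∀ n : ℤ, (k : ℤ) + 1 ≤ n →
      rZ k n = ∑ h ∈ Finset.Icc 2 k, ((h : ℤ) - 1) * rZ k (n - h)
             + ∑ h ∈ Finset.Icc (k + 1) (2*k - 2), (2*(k : ℤ) - h - 1) * rZ k (n - h)) := by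
  refine ⟨?_, ?_, fun j hj hjk => ?_, fun n hn => rZ_recurrence k (by omega)⟩
  · rw [rZ_eq_ncard, rStrings_zero (by omega), Set.ncard_singleton, Nat.cast_one]
  · rw [rZ_eq_ncard, rStrings_one, Set.ncard_empty, Nat.cast_zero]
  · rw [rZ_eq_ncard, rStrings_of_le hj hjk,
      Set.ncard_image_of_injective _ fun u v h => by simpa using h,
      ncard_setOf_length_eq, Fintype.card_bool, Nat.cast_pow, Nat.cast_ofNat]
end

section
/- Let k ≥ 3. Then b_n^(k) = 2·f_{n−1}^(k−1) for all n ≥ 1, and b_0^(k) = 1. -/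
/-- `bcount k n = b_n^(k)`: the number of binary strings of length `n`
avoiding `0^k` and `1^k`. -/
noncomputable def bcount (k n : ℕ) : ℕ :=
  Set.ncard {s : List Bool | s.length = n ∧ Avoids k s}
/-- The `k`-generalized Fibonacci numbers: `f_n^(k) = 2^n` for `0 ≤ n ≤ k−1`
and `f_n^(k) = f_{n−1}^(k) + … + f_{n−k}^(k)` for `n ≥ k`. -/
def genFib (k : ℕ) (n : ℕ) : ℕ :=
  if n < k then 2 ^ n
  else ∑ j ∈ (Finset.Icc 1 k).attach, genFib k (n - j.1)
termination_by n
decreasing_by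
  have hj := j.2
  simp only [Finset.mem_Icc] at hj
  omega


/-!
Record a word `s` by its first letter and its adjacent-equality word, whose `i`-th letter says
whether `s i = s (i + 1)`. This is a bijection from words of length `n + 1` onto
`Bool × {words of length n}`, and runs `0^k`, `1^k` of `s` correspond exactly to runs `1^(k-1)`
of the adjacent-equality word. Hence `b_{n+1}^(k)` is twice the number of words of length `n`
avoiding `1^(k-1)`, and splitting such a word after its leading block `1^i 0` (`i < k - 1`)
shows that this number obeys the `(k-1)`-generalized Fibonacci recursion.
-/

open Finset

theorem List.IsInfix.of_append_cons_of_not_mem {α : Type*} {x u v : List α} {a : α}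
    (h : x <:+: u ++ a :: v) (ha : a ∉ x) : x <:+: u ∨ x <:+: v := by
  obtain ⟨p, q, h⟩ := h
  rcases List.append_eq_append_iff.mp h with ⟨c, hu, -⟩ | ⟨c, hpx, hav⟩
  · exact Or.inl ⟨p, c, hu.symm⟩
  cases c with
  | nil => exact Or.inl ⟨p, [], by simpa using hpx⟩
  | cons a' c =>
    obtain ⟨rfl, rfl⟩ := List.cons_eq_cons.mp hav
    rcases List.append_eq_append_iff.mp hpx with ⟨e, -, rfl⟩ | ⟨e, -, he⟩
    · simp at ha
    cases e with
    | nil =>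
      rw [List.nil_append] at he
      exact absurd (he ▸ List.mem_cons_self) ha
    | cons b e =>
      obtain ⟨-, rfl⟩ := List.cons_eq_cons.mp he
      exact Or.inr ⟨e, q, rfl⟩

def adjEq : List Bool → List Bool
  | [] => []
  | [_] => []
  | a :: b :: t => (a == b) :: adjEq (b :: t)

lemma length_adjEq (s : List Bool) : (adjEq s).length = s.length - 1 := by
  induction s using adjEq.induct <;> simp_all [adjEq]

lemma adjEq_scanl_beq (b : Bool) (ds : List Bool) : adjEq (ds.scanl (· == ·) b) = ds := by
  induction ds generalizing b with
  | nil => rfl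
  | cons d ds ih =>
    cases ds with
    | nil => cases b <;> cases d <;> rfl
    | cons d' ds' =>
      rw [List.scanl_cons, List.scanl_cons, adjEq, ← List.scanl_cons, ih]
      cases b <;> cases d <;> rfl

lemma scanl_beq_adjEq (a : Bool) (t : List Bool) :
    (adjEq (a :: t)).scanl (· == ·) a = a :: t := by
  induction t generalizing a with
  | nil => rfl
  | cons b t ih =>
    rw [adjEq, List.scanl_cons, show (a == (a == b)) = b by cases a <;> cases b <;> rfl, ih]

lemma scanl_beq_replicate_true_append (a : Bool) (j : ℕ) (w : List Bool) :
    (List.replicate j true ++ w).scanl (· == ·) a =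
      List.replicate j a ++ w.scanl (· == ·) a := by
  induction j with
  | zero => rfl
  | succ j ih => simp [List.replicate_succ, ih]

lemma adjEq_suffix_cons (a : Bool) (l : List Bool) : adjEq l <:+ adjEq (a :: l) := by
  cases l with
  | nil => exact List.nil_suffix
  | cons b t => exact List.suffix_cons _ _

lemma List.IsSuffix.adjEq {x s : List Bool} (h : x <:+ s) : adjEq x <:+ adjEq s := by
  obtain ⟨u, rfl⟩ := h
  induction u with
  | nil => exact List.suffix_rfl
  | cons a u ih => exact ih.trans (adjEq_suffix_cons a _)

lemma List.IsPrefix.adjEq {x s : List Bool} (h : x <+: s) : adjEq x <+: adjEq s := by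
  obtain ⟨w, rfl⟩ := h
  induction x using _root_.adjEq.induct with
  | case1 => exact List.nil_prefix
  | case2 => exact List.nil_prefix
  | case3 a b t ih => exact List.cons_prefix_cons.mpr ⟨rfl, ih⟩

lemma List.IsInfix.adjEq {x s : List Bool} (h : x <:+: s) : adjEq x <:+: adjEq s := by
  obtain ⟨u, w, rfl⟩ := h
  exact (List.prefix_append x w).adjEq.isInfix.trans
    (List.append_assoc u x w ▸ List.suffix_append u (x ++ w)).adjEq.isInfix

lemma adjEq_replicate (k : ℕ) (c : Bool) :
    adjEq (List.replicate k c) = List.replicate (k - 1) true := by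
  induction k with
  | zero => rfl
  | succ k ih =>
    cases k with
    | zero => rfl
    | succ k => simp_all [List.replicate_succ, adjEq]

lemma replicate_prefix_of_replicate_true_prefix_adjEq {j : ℕ} {a : Bool} {t : List Bool}
    (h : List.replicate j true <+: adjEq (a :: t)) : List.replicate (j + 1) a <+: a :: t := by
  obtain ⟨w, hw⟩ := h
  have hs := scanl_beq_adjEq a t
  rw [← hw, scanl_beq_replicate_true_append] at hs
  rw [← hs, List.replicate_succ']
  cases w <;> simp [List.scanl_cons]

lemma exists_replicate_infix_of_replicate_true_infix_adjEq {j : ℕ} (hj : 1 ≤ j)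
    {s : List Bool} (h : List.replicate j true <:+: adjEq s) :
    ∃ c, List.replicate (j + 1) c <:+: s := by
  induction s using adjEq.induct with
  | case1 | case2 =>
    have := h.length_le
    simp only [adjEq, List.length_replicate, List.length_nil] at this
    omega
  | case3 a b t ih =>
    rcases List.infix_cons_iff.mp h with h | h
    · exact ⟨a, (replicate_prefix_of_replicate_true_prefix_adjEq h).isInfix⟩
    · obtain ⟨c, hc⟩ := ih h
      exact ⟨c, hc.trans (List.suffix_cons a _).isInfix⟩

lemma avoids_succ_iff {j : ℕ} (hj : 1 ≤ j) (s : List Bool) :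
    Avoids (j + 1) s ↔ ¬ List.replicate j true <:+: adjEq s := by
  refine ⟨fun ⟨h0, h1⟩ h => ?_, fun h => ⟨fun h0 => h ?_, fun h1 => h ?_⟩⟩
  · obtain ⟨_ | _, hc⟩ := exists_replicate_infix_of_replicate_true_infix_adjEq hj h
    exacts [h0 hc, h1 hc]
  · simpa [adjEq_replicate] using h0.adjEq
  · simpa [adjEq_replicate] using h1.adjEq

lemma replicate_true_append_false_inj {i i' : ℕ} {r r' : List Bool} :
    List.replicate i true ++ false :: r = List.replicate i' true ++ false :: r' ↔
      i = i' ∧ r = r' := by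
  induction i generalizing i' with
  | zero => cases i' <;> simp [List.replicate_succ]
  | succ i ih => cases i' <;> simp [List.replicate_succ, ih]

lemma eq_replicate_or_exists_eq_replicate_true_append_false (s : List Bool) :
    s = List.replicate s.length true ∨ ∃ i r, s = List.replicate i true ++ false :: r := by
  induction s with
  | nil => exact Or.inl rfl
  | cons b t ih =>
    cases b with
    | false => exact Or.inr ⟨0, t, rfl⟩
    | true =>
      rcases ih with h | ⟨i, r, h⟩
      · exact Or.inl (by rw [List.length_cons, List.replicate_succ, ← h])
      · exact Or.inr ⟨i + 1, r, by rw [List.replicate_succ, List.cons_append, ← h]⟩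

def boolWords (n : ℕ) : Finset (List Bool) :=
  (univ : Finset (Fin n → Bool)).image List.ofFn

@[simp]
lemma mem_boolWords {n : ℕ} {s : List Bool} : s ∈ boolWords n ↔ s.length = n := by
  simp only [boolWords, mem_image, mem_univ, true_and]
  constructor
  · rintro ⟨f, rfl⟩
    exact List.length_ofFn
  · rintro rfl
    exact ⟨_, List.ofFn_getElem⟩

lemma card_boolWords (n : ℕ) : #(boolWords n) = 2 ^ n := by
  simp [boolWords, card_image_of_injective _ List.ofFn_injective]

instance (k : ℕ) : DecidablePred (Avoids k) :=
  fun _ => inferInstanceAs (Decidable (¬ _ ∧ ¬ _))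

lemma bcount_eq_card (k n : ℕ) : bcount k n = #{s ∈ boolWords n | Avoids k s} := by
  rw [bcount, ← Set.ncard_coe_finset]
  congr 1
  ext s
  simp

lemma bcount_zero {k : ℕ} (hk : k ≠ 0) : bcount k 0 = 1 := by
  rw [bcount_eq_card, card_eq_one]
  refine ⟨[], ?_⟩
  ext s
  simp only [mem_filter, mem_boolWords, List.length_eq_zero_iff, mem_singleton]
  refine ⟨And.left, ?_⟩
  rintro rfl
  simp [Avoids, hk]

def trueRunFree (j n : ℕ) : Finset (List Bool) :=
  {s ∈ boolWords n | ¬ List.replicate j true <:+: s}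

lemma card_filter_avoids_succ {j : ℕ} (hj : 1 ≤ j) (n : ℕ) :
    #{s ∈ boolWords (n + 1) | Avoids (j + 1) s} = 2 * #(trueRunFree j n) := by
  calc #{s ∈ boolWords (n + 1) | Avoids (j + 1) s}
      = #((univ : Finset Bool) ×ˢ trueRunFree j n) := by
        refine card_bij' (fun s _ => (s.headI, adjEq s)) (fun p _ => p.2.scanl (· == ·) p.1)
          ?_ ?_ ?_ ?_
        · intro s hs
          simp only [mem_filter, mem_boolWords] at hs
          simp [trueRunFree, length_adjEq, hs.1, ← avoids_succ_iff hj, hs.2]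
        · rintro ⟨b, d⟩ hd
          simp only [trueRunFree, mem_product, mem_filter, mem_boolWords] at hd
          simp [List.length_scanl, hd.2.1, avoids_succ_iff hj, adjEq_scanl_beq, hd.2.2]
        · rintro (_ | ⟨a, t⟩) hs
          · simp at hs
          · exact scanl_beq_adjEq a t
        · rintro ⟨b, d⟩ -
          refine Prod.ext ?_ (adjEq_scanl_beq b d)
          cases d <;> simp [List.scanl_cons]
    _ = 2 * #(trueRunFree j n) := by simp [card_product]

lemma trueRunFree_eq_biUnion {j n : ℕ} (hjn : j ≤ n) :
    trueRunFree j n = (range j).biUnion fun i =>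
      (trueRunFree j (n - 1 - i)).image (List.replicate i true ++ false :: ·) := by
  ext s
  simp only [trueRunFree, mem_biUnion, mem_range, mem_image, mem_filter, mem_boolWords]
  constructor
  · rintro ⟨hlen, hs⟩
    rcases eq_replicate_or_exists_eq_replicate_true_append_false s with h | ⟨i, r, rfl⟩
    · refine absurd ?_ hs
      rw [h, hlen, ← Nat.sub_add_cancel hjn, List.replicate_add]
      exact List.infix_append_right
    · have hij : i < j := by
        by_contra! hji
        refine hs ⟨[], List.replicate (i - j) true ++ false :: r, ?_⟩
        rw [List.nil_append, ← List.append_assoc, ← List.replicate_add, Nat.add_sub_cancel' hji]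
      refine ⟨i, hij, r, ⟨?_, fun hr => hs (hr.trans
        ((List.suffix_cons false r).isInfix.trans List.infix_append_right))⟩, rfl⟩
      simp at hlen
      omega
  · rintro ⟨i, hij, r, ⟨hlen, hr⟩, rfl⟩
    refine ⟨by simp; omega, fun h => ?_⟩
    rcases h.of_append_cons_of_not_mem (by simp) with h | h
    · have := h.length_le
      simp at this
      omega
    · exact hr h

lemma card_trueRunFree_of_le {j n : ℕ} (hjn : j ≤ n) :
    #(trueRunFree j n) = ∑ i ∈ range j, #(trueRunFree j (n - 1 - i)) := by
  rw [trueRunFree_eq_biUnion hjn, card_biUnion]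
  · refine sum_congr rfl fun i _ => card_image_of_injective _ fun r r' h => ?_
    exact (replicate_true_append_false_inj.mp h).2
  · intro i _ i' _ hii'
    simp only [Function.onFun, disjoint_left, mem_image]
    rintro _ ⟨r, -, rfl⟩ ⟨r', -, h⟩
    exact hii' (replicate_true_append_false_inj.mp h).1.symm

lemma trueRunFree_of_lt {j n : ℕ} (hnj : n < j) : trueRunFree j n = boolWords n :=
  filter_true_of_mem fun s hs h => by
    have := h.length_le
    rw [List.length_replicate, mem_boolWords.mp hs] at this
    omega

lemma genFib_of_lt {j n : ℕ} (hnj : n < j) : genFib j n = 2 ^ n := by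
  rw [genFib, if_pos hnj]

lemma genFib_of_le {j n : ℕ} (hjn : j ≤ n) :
    genFib j n = ∑ i ∈ range j, genFib j (n - 1 - i) := by
  rw [genFib, if_neg (by omega), sum_attach (Icc 1 j) (fun i => genFib j (n - i)),
    ← Ico_add_one_right_eq_Icc, sum_Ico_eq_sum_range]
  refine sum_congr rfl fun i _ => ?_
  congr 1
  omega

lemma card_trueRunFree (j n : ℕ) : #(trueRunFree j n) = genFib j n := by
  induction n using Nat.strong_induction_on with
  | _ n ih =>
    rcases lt_or_ge n j with hnj | hjn
    · rw [trueRunFree_of_lt hnj, card_boolWords, genFib_of_lt hnj]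
    · rw [card_trueRunFree_of_le hjn, genFib_of_le hjn]
      exact sum_congr rfl fun i hi => ih _ (by simp at hi; omega)

/-- `b_0^(k) = 1` and `b_n^(k) = 2 f_{n−1}^(k−1)` for all `n ≥ 1`. -/
theorem bcount_eq_two_mul_genFib (k : ℕ) (hk : 3 ≤ k) :
    bcount k 0 = 1 ∧ ∀ n : ℕ, 1 ≤ n → bcount k n = 2 * genFib (k - 1) (n - 1) := by
  obtain ⟨j, rfl⟩ : ∃ j, k = j + 1 := ⟨k - 1, by omega⟩
  refine ⟨bcount_zero j.succ_ne_zero, fun n hn => ?_⟩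
  obtain ⟨m, rfl⟩ : ∃ m, n = m + 1 := ⟨n - 1, by omega⟩
  rw [bcount_eq_card, card_filter_avoids_succ (by omega), card_trueRunFree, Nat.add_sub_cancel,
    Nat.add_sub_cancel]
end

section
/- Let m ≥ 2, n ≥ 2k, 3 ≤ k ≤ ⌊n/2⌋, j ≥ 2 and 0 ≤ h, h+j ≤ n−2k. Then the set S^(k,h)_{m×n} ∪ S^(k,h+j)_{m×n} is not non-overlapping: there exist a matrix A ∈ S^(k,h)_{m×n} and a matrix B ∈ S^(k,h+j)_{m×n} admitting an overlap (an overlap is obtained by a slipping of the last row of A on the first row of B). -/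
/-- The set `S^(k,h)_{m×n}`: binary `m × n` matrices whose first row is
`1^h 1^{k−1} 0 w 1 0^{k−1}` (with `0w1` of length `n−2k+2−h` avoiding `0^k` and
`1^k`), whose middle rows end with `0` and avoid `0^k` and `1^k`, and whose last
row is `1^h 1^k v 0^k` (with `v` of length `n−2k−h` avoiding `0^k` and `1^k`). -/
def SkhSet (m n k h : ℕ) : Set (Fin m → Fin n → Bool) :=
  {A |
    (∃ v : List Bool, v.length = n - 2*k + 2 - h ∧ Avoids k v ∧
        v.head? = some false ∧ v.getLast? = some true ∧
        row A 0 = List.replicate (h + (k-1)) true ++ v ++ List.replicate (k-1) false) ∧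
    (∀ i : ℕ, 1 ≤ i → i ≤ m - 2 → Avoids k (row A i) ∧ (row A i).getLast? = some false) ∧
    (∃ v : List Bool, v.length = n - 2*k - h ∧ Avoids k v ∧
        row A (m-1) = List.replicate (h + k) true ++ v ++ List.replicate k false)}

namespace SkhAux


lemma ofFn_getD {n : ℕ} (f : ℕ → Bool) (b : Bool) (i : ℕ) (h : i < n) :
    (List.ofFn fun r : Fin n => f r).getD i b = f i := by
  simp [List.getD_eq_getElem?_getD, List.getElem?_ofFn, h]

lemma not_infix_of_exists {k : ℕ} {b : Bool} {l : List Bool}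
    (H : ∀ i, i + k ≤ l.length → ∃ d, d < k ∧ l.getD (i+d) b ≠ b) :
    ¬ (List.replicate k b <:+: l) := by
  rintro ⟨s, t, rfl⟩
  obtain ⟨d, hd, hne⟩ := H s.length (by simp)
  apply hne
  rw [List.append_assoc, List.getD_eq_getElem?_getD,
    List.getElem?_append_right (by omega),
    Nat.add_sub_cancel_left, List.getElem?_append_left (by simpa),
    List.getElem?_replicate, if_pos hd]
  rfl

lemma avoids_ofFn_of_window {k t : ℕ} (f : ℕ → Bool)
    (Hf : ∀ i, i + k ≤ t → ∃ d, d < k ∧ f (i+d) = true)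
    (Ht : ∀ i, i + k ≤ t → ∃ d, d < k ∧ f (i+d) = false) :
    Avoids k (List.ofFn fun i : Fin t => f i) := by
  constructor
  · apply not_infix_of_exists
    intro i hik
    simp only [List.length_ofFn] at hik
    obtain ⟨d, hd, hfd⟩ := Hf i hik
    exact ⟨d, hd, by rw [ofFn_getD _ _ _ (by omega)]; simp [hfd]⟩
  · apply not_infix_of_exists
    intro i hik
    simp only [List.length_ofFn] at hik
    obtain ⟨d, hd, hfd⟩ := Ht i hik
    exact ⟨d, hd, by rw [ofFn_getD _ _ _ (by omega)]; simp [hfd]⟩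

lemma ofFn_tripartite (n c₁ c₂ t : ℕ) (g g' : ℕ → Bool)
    (hn : c₁ + t + c₂ = n)
    (h1 : ∀ r, r < c₁ → g r = true)
    (h2 : ∀ r, r < t → g (c₁ + r) = g' r)
    (h3 : ∀ r, c₁ + t ≤ r → r < n → g r = false) :
    (List.ofFn fun i : Fin n => g i) =
      List.replicate c₁ true ++ (List.ofFn fun i : Fin t => g' i) ++ List.replicate c₂ false := by
  apply List.ext_getElem (by simp; omega)
  intro i hi1 hi2
  simp only [List.getElem_ofFn]
  rcases lt_or_ge i c₁ with hc | hc
  · rw [List.getElem_append_left (by simp [hc]; omega), List.getElem_append_left (by simpa),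
      List.getElem_replicate]
    exact h1 i hc
  · rcases lt_or_ge i (c₁ + t) with hc' | hc'
    · rw [List.getElem_append_left (by simp; omega), List.getElem_append_right (by simpa),
        List.getElem_ofFn]
      have := h2 (i - c₁) (by omega)
      simp only [List.length_replicate]
      rw [show c₁ + (i - c₁) = i by omega] at this
      simpa using this
    · rw [List.getElem_append_right (by simp; omega), List.getElem_replicate]
      exact h3 i hc' (by simpa using hi1)

lemma ofFn_head? {t : ℕ} (f : ℕ → Bool) (ht : 0 < t) :
    (List.ofFn fun i : Fin t => f i).head? = some (f 0) := by
  rw [List.head?_eq_getElem?]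
  simp [List.getElem?_ofFn, ht]

lemma ofFn_getLast? {t : ℕ} (f : ℕ → Bool) (ht : 0 < t) :
    (List.ofFn fun i : Fin t => f i).getLast? = some (f (t-1)) := by
  rw [List.getLast?_eq_getElem?]
  simp [List.getElem?_ofFn, Nat.sub_lt ht]


def pat (t r : ℕ) : Bool := if r = 0 then false else decide ((t - 1 - r) % 2 = 0)
def gfun (l k r : ℕ) : Bool := if r < l then pat l r else decide ((r - l) % k = k - 1)
def altf (r : ℕ) : Bool := decide (r % 2 = 0)
def midf (n r : ℕ) : Bool := decide ((n - 1 - r) % 2 = 1)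

lemma pat_window (t i : ℕ) (h3 : i + 3 ≤ t) : ∃ d, d < 3 ∧ pat t (i+d) = true := by
  by_cases hp : (t - 2 - i) % 2 = 0
  · exact ⟨1, by omega, by unfold pat; rw [if_neg (by omega)]; simp; omega⟩
  · exact ⟨2, by omega, by unfold pat; rw [if_neg (by omega)]; simp; omega⟩

lemma pat_false_window (t i k : ℕ) (hk : 3 ≤ k) (h3 : i + k ≤ t) :
    ∃ d, d < k ∧ pat t (i+d) = false := by
  by_cases h0 : i = 0
  · exact ⟨0, by omega, by subst h0; rfl⟩
  · by_cases hp : (t - 1 - i) % 2 = 1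
    · exact ⟨0, by omega, by unfold pat; rw [if_neg (by omega)]; simp; omega⟩
    · exact ⟨1, by omega, by unfold pat; rw [if_neg (by omega)]; simp; omega⟩

lemma succ_mod_eq_zero {x k : ℕ} (hk : 2 ≤ k) (hx : x % k = k - 1) : (x + 1) % k = 0 := by
  have h := Nat.div_add_mod x k
  have h2 : x + 1 = k * (x / k) + k := by omega
  rw [h2, show k * (x / k) + k = k * (x / k + 1) from (Nat.mul_succ k (x / k)).symm,
    Nat.mul_mod_right]

lemma gfun_true_window (l k i : ℕ) (hk : 3 ≤ k) (hl : 2 ≤ l) :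
    ∃ d, d < k ∧ gfun l k (i+d) = true := by
  rcases lt_or_ge i l with hc | hc
  · rcases lt_or_ge (i + k) l with hc2 | hc2
    · obtain ⟨d, hd, hpd⟩ := pat_window l i (by omega)
      exact ⟨d, by omega, by unfold gfun; rw [if_pos (by omega)]; exact hpd⟩
    · refine ⟨l - 1 - i, by omega, ?_⟩
      unfold gfun
      rw [show i + (l - 1 - i) = l - 1 by omega, if_pos (by omega)]
      unfold pat
      rw [if_neg (by omega)]
      simp
  · refine ⟨k - 1 - (i - l) % k, by omega, ?_⟩
    have hm : (i - l) % k < k := Nat.mod_lt _ (by omega)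
    unfold gfun
    rw [if_neg (by omega)]
    rw [show (i + (k - 1 - (i - l) % k) - l) = (i - l) + (k - 1 - (i - l) % k) by omega]
    simp only [decide_eq_true_eq]
    rw [Nat.add_mod, Nat.mod_eq_of_lt (show k - 1 - (i - l) % k < k by omega),
      show (i - l) % k + (k - 1 - (i - l) % k) = k - 1 by omega,
      Nat.mod_eq_of_lt (by omega)]

lemma gfun_false_pair (l k i : ℕ) (hk : 3 ≤ k) :
    gfun l k i = false ∨ gfun l k (i+1) = false := by
  by_cases hgi : gfun l k i = false
  · exact Or.inl hgi
  right
  unfold gfun at hgi ⊢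
  rcases lt_or_ge (i+1) l with hc | hc
  · rw [if_pos hc]
    rw [if_pos (by omega)] at hgi
    unfold pat at hgi ⊢
    by_cases h0 : i = 0
    · simp [h0] at hgi
    · rw [if_neg h0] at hgi
      rw [if_neg (by omega)]
      simp only [Bool.not_eq_false, decide_eq_true_eq] at hgi
      simp only [decide_eq_false_iff_not]
      omega
  · rcases lt_or_ge i l with hc2 | hc2
    · rw [if_neg (by omega)]
      simp only [decide_eq_false_iff_not]
      rw [show i + 1 - l = 0 by omega, Nat.zero_mod]
      omega
    · rw [if_neg (by omega)] at hgi
      rw [if_neg (by omega)]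
      simp only [Bool.not_eq_false, decide_eq_true_eq] at hgi
      simp only [decide_eq_false_iff_not]
      rw [show i + 1 - l = (i - l) + 1 by omega, succ_mod_eq_zero (by omega) hgi]
      omega


def firstRowF (n k h' r : ℕ) : Bool :=
  if r < h' + k - 1 then true
  else if r < n - (k-1) then pat (n - 2*k + 2 - h') (r - (h' + k - 1)) else false
def lastRowAF (n k h j r : ℕ) : Bool :=
  if r < h + k then true
  else if r < n - k then gfun (n - 2*k + 2 - (h+j)) k (r - (h + k)) else false
def lastRowBF (n k h' r : ℕ) : Bool :=
  if r < h' + k then true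
  else if r < n - k then altf (r - (h' + k)) else false
def fAf (m n k h j i r : ℕ) : Bool :=
  if i = 0 then firstRowF n k h r
  else if i = m - 1 then lastRowAF n k h j r else midf n r
def fBf (m n k h j i r : ℕ) : Bool :=
  if i = 0 then firstRowF n k (h+j) r
  else if i = m - 1 then lastRowBF n k (h+j) r else midf n r

lemma avoids_pat (k t : ℕ) (hk : 3 ≤ k) :
    Avoids k (List.ofFn fun i : Fin t => pat t i) := by
  refine avoids_ofFn_of_window _ ?_ ?_
  · intro i hik
    obtain ⟨d, hd, hpd⟩ := pat_window t i (by omega)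
    exact ⟨d, by omega, hpd⟩
  · intro i hik
    exact pat_false_window t i k hk hik

lemma avoids_gfun (k l t : ℕ) (hk : 3 ≤ k) (hl : 2 ≤ l) :
    Avoids k (List.ofFn fun i : Fin t => gfun l k i) := by
  refine avoids_ofFn_of_window _ ?_ ?_
  · intro i hik
    exact gfun_true_window l k i hk hl
  · intro i hik
    rcases gfun_false_pair l k i hk with hg | hg
    · exact ⟨0, by omega, hg⟩
    · exact ⟨1, by omega, hg⟩

lemma avoids_alt {k t : ℕ} (f : ℕ → Bool) (hk : 3 ≤ k)
    (halt : ∀ i, i + 1 < t → f i ≠ f (i+1)) :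
    Avoids k (List.ofFn fun i : Fin t => f i) := by
  refine avoids_ofFn_of_window _ ?_ ?_
  · intro i hik
    have h := halt i (by omega)
    cases hfi : f i with
    | true => exact ⟨0, by omega, hfi⟩
    | false =>
      refine ⟨1, by omega, ?_⟩
      rw [hfi] at h
      cases hv : f (i+1) with
      | true => rfl
      | false => exact absurd hv.symm h
  · intro i hik
    have h := halt i (by omega)
    cases hfi : f i with
    | false => exact ⟨0, by omega, hfi⟩
    | true =>
      refine ⟨1, by omega, ?_⟩
      rw [hfi] at h
      cases hv : f (i+1) with
      | false => rfl
      | true => exact absurd hv.symm h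

lemma avoids_midf (k n t : ℕ) (hk : 3 ≤ k) (ht : t ≤ n) :
    Avoids k (List.ofFn fun i : Fin t => midf n i) := by
  refine avoids_alt _ hk ?_
  intro i hi
  unfold midf
  simp only [ne_eq, decide_eq_decide]
  omega

lemma avoids_altf (k t : ℕ) (hk : 3 ≤ k) :
    Avoids k (List.ofFn fun i : Fin t => altf i) := by
  refine avoids_alt _ hk ?_
  intro i hi
  unfold altf
  simp only [ne_eq, decide_eq_decide]
  omega

lemma row_fun {m n : ℕ} (f : ℕ → ℕ → Bool) (i : ℕ) (him : i < m) :
    row (m := m) (n := n) (fun a b => f a.val b.val) i = List.ofFn fun jj : Fin n => f i jj := by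
  unfold row
  simp [him]

lemma key (n k h j s s' : ℕ) (hk : 3 ≤ k) (hj : 2 ≤ j) (hn : 2*k ≤ n) (hhj : h + j ≤ n - 2*k)
    (hs' : s' < n) (he : s' = s + (j-1)) :
    lastRowAF n k h j s = firstRowF n k (h+j) s' := by
  unfold lastRowAF firstRowF gfun
  rcases lt_or_ge s (h+k) with c1 | c1
  · rw [if_pos c1, if_pos (by omega)]
  · rw [if_neg (by omega)]
    rcases lt_or_ge s (n-k) with c2 | c2
    · rw [if_pos c2, if_neg (show ¬ s' < h + j + k - 1 by omega)]
      rcases lt_or_ge (s - (h+k)) (n - 2*k + 2 - (h+j)) with c3 | c3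
      · rw [if_pos c3, if_pos (by omega)]
        congr 1
        omega
      · rw [if_neg (by omega), if_neg (show ¬ s' < n - (k-1) by omega)]
        simp only [decide_eq_false_iff_not]
        rw [Nat.mod_eq_of_lt (show s - (h+k) - (n - 2*k + 2 - (h+j)) < k by omega)]
        omega
    · rw [if_neg (by omega), if_neg (show ¬ s' < h + j + k - 1 by omega),
        if_neg (show ¬ s' < n - (k-1) by omega)]

end SkhAux

open SkhAux

/-- For `j ≥ 2`, the set `S^(k,h)_{m×n} ∪ S^(k,h+j)_{m×n}` is not non-overlapping:
some `A ∈ S^(k,h)_{m×n}` and `B ∈ S^(k,h+j)_{m×n}` admit an overlap. -/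
theorem SkhSet_union_not_nonOverlapping (m n k h j : ℕ) (hm : 2 ≤ m) (hk : 3 ≤ k)
    (hkn : k ≤ n / 2) (hn : 2 * k ≤ n) (hj : 2 ≤ j) (hhj : h + j ≤ n - 2*k) :
    ∃ A ∈ SkhSet m n k h, ∃ B ∈ SkhSet m n k (h + j), ∃ p q : ℤ, IsOverlap A B p q := by
  refine ⟨fun a b => fAf m n k h j a.val b.val, ⟨?_, ?_, ?_⟩,
    fun a b => fBf m n k h j a.val b.val, ⟨?_, ?_, ?_⟩,
    -((m:ℤ)-1), (j:ℤ)-1, ?_, ?_, ?_, ?_⟩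
  · -- A first row
    refine ⟨List.ofFn fun i : Fin (n - 2*k + 2 - h) => pat (n - 2*k + 2 - h) i,
      by simp, avoids_pat k _ hk, ?_, ?_, ?_⟩
    · rw [ofFn_head? _ (by omega)]
      simp [pat]
    · rw [ofFn_getLast? _ (by omega)]
      unfold pat
      rw [if_neg (by omega)]
      simp
    · rw [row_fun _ 0 (by omega)]
      have he : ∀ r, fAf m n k h j 0 r = firstRowF n k h r := by
        intro r; unfold fAf; rw [if_pos rfl]
      simp only [he]
      refine ofFn_tripartite n (h+(k-1)) (k-1) _ _ _ (by omega) ?_ ?_ ?_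
      · intro r hr; unfold firstRowF; rw [if_pos (by omega)]
      · intro r hr
        unfold firstRowF
        rw [if_neg (by omega), if_pos (by omega), show h+(k-1)+r-(h+k-1) = r by omega]
      · intro r hr1 hr2
        unfold firstRowF
        rw [if_neg (by omega), if_neg (by omega)]
  · -- A middle rows
    intro i hi1 hi2
    rw [row_fun _ i (by omega)]
    have he : ∀ r, fAf m n k h j i r = midf n r := by
      intro r; unfold fAf; rw [if_neg (by omega), if_neg (by omega)]
    simp only [he]
    refine ⟨avoids_midf k n n hk le_rfl, ?_⟩
    rw [ofFn_getLast? _ (by omega)]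
    unfold midf
    simp
  · -- A last row
    refine ⟨List.ofFn fun i : Fin (n - 2*k - h) => gfun (n - 2*k + 2 - (h+j)) k i,
      by simp, avoids_gfun k _ _ hk (by omega), ?_⟩
    rw [row_fun _ (m-1) (by omega)]
    have he : ∀ r, fAf m n k h j (m-1) r = lastRowAF n k h j r := by
      intro r; unfold fAf; rw [if_neg (by omega), if_pos rfl]
    simp only [he]
    refine ofFn_tripartite n (h+k) k _ _ _ (by omega) ?_ ?_ ?_
    · intro r hr; unfold lastRowAF; rw [if_pos (by omega)]
    · intro r hr
      unfold lastRowAF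
      rw [if_neg (by omega), if_pos (by omega), show h+k+r-(h+k) = r by omega]
    · intro r hr1 hr2
      unfold lastRowAF
      rw [if_neg (by omega), if_neg (by omega)]
  · -- B first row
    refine ⟨List.ofFn fun i : Fin (n - 2*k + 2 - (h+j)) => pat (n - 2*k + 2 - (h+j)) i,
      by simp, avoids_pat k _ hk, ?_, ?_, ?_⟩
    · rw [ofFn_head? _ (by omega)]
      simp [pat]
    · rw [ofFn_getLast? _ (by omega)]
      unfold pat
      rw [if_neg (by omega)]
      simp
    · rw [row_fun _ 0 (by omega)]
      have he : ∀ r, fBf m n k h j 0 r = firstRowF n k (h+j) r := by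
        intro r; unfold fBf; rw [if_pos rfl]
      simp only [he]
      refine ofFn_tripartite n ((h+j)+(k-1)) (k-1) _ _ _ (by omega) ?_ ?_ ?_
      · intro r hr; unfold firstRowF; rw [if_pos (by omega)]
      · intro r hr
        unfold firstRowF
        rw [if_neg (by omega), if_pos (by omega), show (h+j)+(k-1)+r-((h+j)+k-1) = r by omega]
      · intro r hr1 hr2
        unfold firstRowF
        rw [if_neg (by omega), if_neg (by omega)]
  · -- B middle rows
    intro i hi1 hi2
    rw [row_fun _ i (by omega)]
    have he : ∀ r, fBf m n k h j i r = midf n r := by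
      intro r; unfold fBf; rw [if_neg (by omega), if_neg (by omega)]
    simp only [he]
    refine ⟨avoids_midf k n n hk le_rfl, ?_⟩
    rw [ofFn_getLast? _ (by omega)]
    unfold midf
    simp
  · -- B last row
    refine ⟨List.ofFn fun i : Fin (n - 2*k - (h+j)) => altf i,
      by simp, avoids_altf k _ hk, ?_⟩
    rw [row_fun _ (m-1) (by omega)]
    have he : ∀ r, fBf m n k h j (m-1) r = lastRowBF n k (h+j) r := by
      intro r; unfold fBf; rw [if_neg (by omega), if_pos rfl]
    simp only [he]
    refine ofFn_tripartite n ((h+j)+k) k _ _ _ (by omega) ?_ ?_ ?_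
    · intro r hr; unfold lastRowBF; rw [if_pos (by omega)]
    · intro r hr
      unfold lastRowBF
      rw [if_neg (by omega), if_pos (by omega), show (h+j)+k+r-((h+j)+k) = r by omega]
    · intro r hr1 hr2
      unfold lastRowBF
      rw [if_neg (by omega), if_neg (by omega)]
  · -- nonzero shift
    rintro ⟨hp, -⟩
    omega
  · -- |p| bound
    omega
  · -- |q| bound
    omega
  · -- pointwise condition
    intro i2 j2 i3 j3 hpe hqe
    have hb2 := i2.isLt
    have hb3 := i3.isLt
    have hc2 := j2.isLt
    have hc3 := j3.isLt
    have hi2 : (i2:ℕ) = m - 1 := by omega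
    have hi3 : (i3:ℕ) = 0 := by omega
    have hj3 : (j3:ℕ) = (j2:ℕ) + (j - 1) := by omega
    show fAf m n k h j i2.val j2.val = fBf m n k h j i3.val j3.val
    rw [hi2, hi3]
    unfold fAf fBf
    rw [if_neg (show ¬ m-1 = 0 by omega), if_pos rfl, if_pos rfl]
    exact key n k h j _ _ hk hj hn hhj j3.isLt hj3
end
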